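/- arXiv:2302.13176 — 3 statements merged into one kernel-verified Lean document; each statement's English description precedes it below -/
import Mathlib

section
/- Let X, Y and A be jointly distributed random variables on finite sets, let ν be a real number, and let b be a nonnegative real number such that A takes at most 2^b possible values (i.e., the support of A has cardinality at most 2^b). Then H̃^{fuzz}_{ν,∞}(X|A) ≥ H^{fuzz}_{ν,∞}(X) − b. -/
open Finset Real
open scoped Classical

/-- Auxiliary abstract lemma. -/
lemma aux_leakage {𝒳 𝒜 : Type*} [Fintype 𝒳] [Fintype 𝒜] [Nonempty 𝒳]
    (R : 𝒳 → 𝒜 → ℝ) (hR : ∀ x a, 0 ≤ R x a) (b : ℝ) (hb : 0 ≤ b)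
    (T : Finset 𝒜)
    (hT : ∀ x a, a ∉ T → R x a = 0)
    (hcard : (T.card : ℝ) ≤ (2:ℝ) ^ b) :
    - Real.logb 2 (∑ a ∈ T, univ.sup' univ_nonempty (fun x => R x a)) ≥
      - Real.logb 2 (univ.sup' univ_nonempty (fun x => ∑ a, R x a)) - b := by
  set S := ∑ a ∈ T, univ.sup' univ_nonempty (fun x => R x a) with hS
  set M := univ.sup' univ_nonempty (fun x => ∑ a, R x a) with hM
  obtain ⟨x₀⟩ := ‹Nonempty 𝒳›
  have hM0 : 0 ≤ M := by
    rw [hM]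
    exact le_trans (Finset.sum_nonneg fun a _ => hR x₀ a)
      (Finset.le_sup' (fun x => ∑ a, R x a) (mem_univ x₀))
  have hsup_nonneg : ∀ a, 0 ≤ univ.sup' univ_nonempty (fun x => R x a) := fun a =>
    le_trans (hR x₀ a) (Finset.le_sup' (fun x => R x a) (mem_univ x₀))
  have hS0 : 0 ≤ S := Finset.sum_nonneg fun a _ => hsup_nonneg a
  have hsupM : ∀ a, univ.sup' univ_nonempty (fun x => R x a) ≤ M := by
    intro a
    apply Finset.sup'_le
    intro x _
    rw [hM]
    exact le_trans (Finset.single_le_sum (fun a' _ => hR x a') (mem_univ a))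
      (Finset.le_sup' (fun x => ∑ a, R x a) (mem_univ x))
  have hSM : S ≤ (2:ℝ) ^ b * M := by
    calc S ≤ ∑ _a ∈ T, M := Finset.sum_le_sum fun a _ => hsupM a
    _ = (T.card : ℝ) * M := by rw [Finset.sum_const, nsmul_eq_mul]
    _ ≤ (2:ℝ) ^ b * M := mul_le_mul_of_nonneg_right hcard hM0
  rcases lt_or_eq_of_le hS0 with hSpos | hSzero
  · -- S > 0
    have hMpos : 0 < M := by
      by_contra h
      push_neg at h
      have : (2:ℝ) ^ b * M ≤ 0 := mul_nonpos_of_nonneg_of_nonpos (le_of_lt (Real.rpow_pos_of_pos (by norm_num) b)) h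
      linarith
    have h2b : (0:ℝ) < (2:ℝ) ^ b := Real.rpow_pos_of_pos (by norm_num) b
    have h1 : Real.logb 2 S ≤ Real.logb 2 ((2:ℝ) ^ b * M) :=
      Real.logb_le_logb_of_le (by norm_num) hSpos hSM
    have h2 : Real.logb 2 ((2:ℝ) ^ b * M) = b + Real.logb 2 M := by
      rw [Real.logb_mul (ne_of_gt h2b) (ne_of_gt hMpos),
        Real.logb_rpow (by norm_num) (by norm_num)]
    linarith
  · -- S = 0
    have hterm : ∀ a ∈ T, univ.sup' univ_nonempty (fun x => R x a) = 0 := by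
      intro a ha
      exact (Finset.sum_eq_zero_iff_of_nonneg (fun a _ => hsup_nonneg a)).mp hSzero.symm a ha
    have hRzero : ∀ x a, R x a = 0 := by
      intro x a
      by_cases ha : a ∈ T
      · have h1 : R x a ≤ 0 := (hterm a ha) ▸ Finset.le_sup' (fun x => R x a) (mem_univ x)
        exact le_antisymm h1 (hR x a)
      · exact hT x a ha
    have hMz : M = 0 := by
      rw [hM]
      have : (fun x => ∑ a, R x a) = fun _ => (0:ℝ) := by
        funext x; exact Finset.sum_eq_zero fun a _ => hRzero x a
      rw [this]
      simp
    rw [← hSzero, hMz, Real.logb_zero]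
    linarith

/-- If `A` has support of size at most `2^b` (`b ≥ 0`), then
`H̃^{fuzz}_{ν,∞}(X|A) ≥ H^{fuzz}_{ν,∞}(X) − b`, for `X, Y, A` jointly distributed. -/
theorem cond_fuzzy_min_entropy_leakage
    {𝒳 𝒴 𝒜 : Type*} [Fintype 𝒳] [Fintype 𝒴] [Fintype 𝒜]
    [Nonempty 𝒳] [Nonempty 𝒴] [Nonempty 𝒜]
    (p : 𝒳 → 𝒴 → 𝒜 → ℝ) (hp : ∀ x y a, 0 ≤ p x y a)
    (hsum : ∑ x, ∑ y, ∑ a, p x y a = 1) (ν : ℝ)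
    (b : ℝ) (hb : 0 ≤ b)
    (hcard : ((univ.filter (fun a => 0 < ∑ x, ∑ y, p x y a)).card : ℝ) ≤ (2:ℝ) ^ b) :
    - Real.logb 2 (∑ a ∈ univ.filter (fun a => 0 < ∑ x, ∑ y, p x y a),
        (∑ x, ∑ y, p x y a) *
          univ.sup' univ_nonempty (fun x =>
            ∑ y ∈ univ.filter (fun y =>
                0 < (∑ x', ∑ a', p x' y a') ∧
                  (2:ℝ) ^ (-ν) ≤ (∑ a', p x y a') / (∑ x', ∑ a', p x' y a')),
              (∑ x', p x' y a) / (∑ x', ∑ y', p x' y' a))) ≥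
      (- Real.logb 2 (univ.sup' univ_nonempty (fun x =>
          ∑ y ∈ univ.filter (fun y =>
              0 < (∑ x', ∑ a', p x' y a') ∧
                (2:ℝ) ^ (-ν) ≤ (∑ a', p x y a') / (∑ x', ∑ a', p x' y a')),
            ∑ x', ∑ a', p x' y a'))) - b := by
  set T := univ.filter (fun a : 𝒜 => 0 < ∑ x, ∑ y, p x y a) with hTdef
  set R : 𝒳 → 𝒜 → ℝ := fun x a =>
    ∑ y ∈ univ.filter (fun y =>
        0 < (∑ x', ∑ a', p x' y a') ∧
          (2:ℝ) ^ (-ν) ≤ (∑ a', p x y a') / (∑ x', ∑ a', p x' y a')),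
      ∑ x', p x' y a with hRdef
  have hRnn : ∀ x a, 0 ≤ R x a := by
    intro x a
    simp only [hRdef]
    exact Finset.sum_nonneg fun y _ => Finset.sum_nonneg fun x' _ => hp x' y a
  have hTzero : ∀ x a, a ∉ T → R x a = 0 := by
    intro x a ha
    rw [hTdef, mem_filter] at ha
    push_neg at ha
    have hq0 : ∑ x, ∑ y, p x y a = 0 :=
      le_antisymm (ha (mem_univ a))
        (Finset.sum_nonneg fun x _ => Finset.sum_nonneg fun y _ => hp x y a)
    have hpz : ∀ x' y, p x' y a = 0 := by
      intro x' y
      have h1 := (Finset.sum_eq_zero_iff_of_nonneg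
        (fun x _ => Finset.sum_nonneg fun y _ => hp x y a)).mp hq0 x' (mem_univ x')
      exact (Finset.sum_eq_zero_iff_of_nonneg (fun y _ => hp x' y a)).mp h1 y (mem_univ y)
    simp only [hRdef]
    exact Finset.sum_eq_zero fun y _ => Finset.sum_eq_zero fun x' _ => hpz x' y
  have h1 : (∑ a ∈ T,
        (∑ x, ∑ y, p x y a) *
          univ.sup' univ_nonempty (fun x =>
            ∑ y ∈ univ.filter (fun y =>
                0 < (∑ x', ∑ a', p x' y a') ∧
                  (2:ℝ) ^ (-ν) ≤ (∑ a', p x y a') / (∑ x', ∑ a', p x' y a')),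
              (∑ x', p x' y a) / (∑ x', ∑ y', p x' y' a))) =
      ∑ a ∈ T, univ.sup' univ_nonempty (fun x => R x a) := by
    refine Finset.sum_congr rfl ?_
    intro a ha
    rw [hTdef, mem_filter] at ha
    have hq : 0 < ∑ x, ∑ y, p x y a := ha.2
    have hcomp : (∑ x, ∑ y, p x y a) *
        univ.sup' univ_nonempty (fun x =>
          ∑ y ∈ univ.filter (fun y =>
              0 < (∑ x', ∑ a', p x' y a') ∧
                (2:ℝ) ^ (-ν) ≤ (∑ a', p x y a') / (∑ x', ∑ a', p x' y a')),
            (∑ x', p x' y a) / (∑ x', ∑ y', p x' y' a)) =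
        univ.sup' univ_nonempty ((fun z => (∑ x, ∑ y, p x y a) * z) ∘ (fun x =>
          ∑ y ∈ univ.filter (fun y =>
              0 < (∑ x', ∑ a', p x' y a') ∧
                (2:ℝ) ^ (-ν) ≤ (∑ a', p x y a') / (∑ x', ∑ a', p x' y a')),
            (∑ x', p x' y a) / (∑ x', ∑ y', p x' y' a))) :=
      Finset.comp_sup'_eq_sup'_comp univ_nonempty (fun z => (∑ x, ∑ y, p x y a) * z)
        (fun u v => mul_max_of_nonneg u v hq.le)
    rw [hcomp]
    refine Finset.sup'_congr univ_nonempty rfl ?_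
    intro x _
    simp only [Function.comp, hRdef]
    rw [Finset.mul_sum]
    refine Finset.sum_congr rfl ?_
    intro y _
    rw [mul_comm, div_mul_cancel₀ _ (ne_of_gt hq)]
  have h2 : univ.sup' univ_nonempty (fun x : 𝒳 =>
        ∑ y ∈ univ.filter (fun y =>
            0 < (∑ x', ∑ a', p x' y a') ∧
              (2:ℝ) ^ (-ν) ≤ (∑ a', p x y a') / (∑ x', ∑ a', p x' y a')),
          ∑ x', ∑ a', p x' y a') =
      univ.sup' univ_nonempty (fun x => ∑ a, R x a) := by
    refine Finset.sup'_congr univ_nonempty rfl ?_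
    intro x _
    simp only [hRdef]
    symm
    conv_lhs => rw [Finset.sum_comm]
    exact Finset.sum_congr rfl fun y _ => Finset.sum_comm
  rw [h1, h2]
  exact aux_leakage R hRnn b hb T hTzero hcard
end

section
/- Let X and Y be jointly distributed random variables on finite sets 𝒳 and 𝒴, and let ν ∈ ℝ, ε_1 ≥ 0, t ∈ ℕ satisfy Pr_{(x,y)←(X,Y)}[ Pr[X=x|Y=y] < 2^{−ν} ] ≤ ε_1. Let h : 𝒳 × 𝒮 → {0,1}^t be a universal hash family and let S be uniform on 𝒮 and independent of (X,Y). For each y define ℛ(y) = { x ∈ 𝒳 : Pr[X=x|Y=y] ≥ 2^{−ν} }. Then the probability of the failure event — that X ∉ ℛ(Y), or that there exists x̂ ∈ ℛ(Y) with x̂ ≠ X and h(x̂, S) = h(X, S) — is at most ε_1 + 2^{ν−t}. -/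
/-!
Split the failure event into `X ∉ ℛ(Y)`, of probability at most `ε₁` by hypothesis, and a
collision of `X` with another candidate. Every candidate carries conditional mass at least
`2^{-ν}`, so `|ℛ(y)| ≤ 2^ν`; a union bound over the candidates and universality of `h` bound
the collision probability, for each fixed `(x, y)`, by `|ℛ(y)| · 2^{-t} ≤ 2^{ν-t}`.
-/

open Finset Real
open scoped Classical

theorem card_filter_le_div_sum_le_inv {α : Type*} [Fintype α] (w : α → ℝ) (hw : ∀ x, 0 ≤ w x)
    {a : ℝ} (ha : 0 < a) : (#{x | a ≤ w x / ∑ x', w x'} : ℝ) ≤ a⁻¹ := by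
  rcases (sum_nonneg fun x _ => hw x : 0 ≤ ∑ x', w x').eq_or_lt with hW | hW
  · have hempty : ({x | a ≤ w x / ∑ x', w x'} : Finset α) = ∅ :=
      filter_false_of_mem fun x _ => by rw [← hW, div_zero]; exact ha.not_ge
    rw [hempty, card_empty, Nat.cast_zero]
    exact inv_nonneg.mpr ha.le
  · have hmass : #{x | a ≤ w x / ∑ x', w x'} • (a * ∑ x', w x') ≤ ∑ x', w x' :=
      (card_nsmul_le_sum _ _ _ fun x hx => (le_div_iff₀ hW).mp (mem_filter.mp hx).2).trans
        (sum_le_univ_sum_of_nonneg hw)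
    rw [nsmul_eq_mul, ← mul_assoc] at hmass
    have hcard : (#{x | a ≤ w x / ∑ x', w x'} : ℝ) * a ≤ 1 :=
      le_of_mul_le_mul_right (by rwa [one_mul]) hW
    rw [← mul_one a⁻¹]
    exact (le_inv_mul_iff₀' ha).mpr hcard

theorem card_filter_exists_collision_div_le {α 𝒮 β : Type*} [Fintype α] [Fintype 𝒮]
    [DecidableEq α] [DecidableEq β] (h : α → 𝒮 → β) {δ : ℝ} (hδ : 0 ≤ δ)
    (huniv : ∀ x₁ x₂ : α, x₁ ≠ x₂ → (#{s | h x₁ s = h x₂ s} : ℝ) / Fintype.card 𝒮 ≤ δ)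
    (G : α → Prop) [DecidablePred G] (x : α) :
    (#{s | ∃ xhat, G xhat ∧ xhat ≠ x ∧ h xhat s = h x s} : ℝ) / Fintype.card 𝒮
      ≤ #{xhat | G xhat} * δ := by
  have hunion : ({s | ∃ xhat, G xhat ∧ xhat ≠ x ∧ h xhat s = h x s} : Finset 𝒮) ⊆
      (({xhat | G xhat} : Finset α).erase x).biUnion fun xhat => {s | h xhat s = h x s} := by
    intro s hs
    obtain ⟨xhat, hG, hne, hcol⟩ := (mem_filter.mp hs).2
    exact mem_biUnion.mpr ⟨xhat, mem_erase.mpr ⟨hne, mem_filter.mpr ⟨mem_univ _, hG⟩⟩,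
      mem_filter.mpr ⟨mem_univ _, hcol⟩⟩
  calc (#{s | ∃ xhat, G xhat ∧ xhat ≠ x ∧ h xhat s = h x s} : ℝ) / Fintype.card 𝒮
      ≤ (∑ xhat ∈ ({xhat | G xhat} : Finset α).erase x, (#{s | h xhat s = h x s} : ℝ)) /
          Fintype.card 𝒮 := by
        gcongr
        exact_mod_cast (card_le_card hunion).trans card_biUnion_le
    _ ≤ ∑ xhat ∈ ({xhat | G xhat} : Finset α).erase x, δ := by
        rw [sum_div]
        exact sum_le_sum fun xhat hxhat => huniv xhat x (mem_erase.mp hxhat).1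
    _ ≤ #{xhat | G xhat} * δ := by
        rw [sum_const, nsmul_eq_mul]
        exact mul_le_mul_of_nonneg_right (by exact_mod_cast card_erase_le) hδ

theorem sum_mul_inv_card_mul_ite_or_le {𝒮 : Type*} [Fintype 𝒮] (A : Prop) [Decidable A]
    (B : 𝒮 → Prop) [DecidablePred B]
    {q δ : ℝ} (hq : 0 ≤ q) (hB : (#{s | B s} : ℝ) / Fintype.card 𝒮 ≤ δ) :
    ∑ s, q * (Fintype.card 𝒮 : ℝ)⁻¹ * (if A ∨ B s then (1:ℝ) else 0)
      ≤ (if A then q else 0) + q * δ := by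
  rw [← mul_sum, sum_boole]
  by_cases hA : A
  · simp only [hA, true_or, filter_true, card_univ, if_true]
    have hδ : 0 ≤ δ := (div_nonneg (Nat.cast_nonneg _) (Nat.cast_nonneg _)).trans hB
    have hfrac : (Fintype.card 𝒮 : ℝ)⁻¹ * Fintype.card 𝒮 ≤ 1 := inv_mul_le_one
    calc q * (Fintype.card 𝒮 : ℝ)⁻¹ * Fintype.card 𝒮
        = q * ((Fintype.card 𝒮 : ℝ)⁻¹ * Fintype.card 𝒮) := mul_assoc _ _ _
      _ ≤ q := mul_le_of_le_one_right hq hfrac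
      _ ≤ q + q * δ := le_add_of_nonneg_right (mul_nonneg hq hδ)
  · simp only [hA, false_or, if_false, zero_add]
    calc q * (Fintype.card 𝒮 : ℝ)⁻¹ * #{s | B s} = q * (#{s | B s} / Fintype.card 𝒮) := by ring
      _ ≤ q * δ := mul_le_mul_of_nonneg_left hB hq

theorem owska_reliability_general
    {𝒳 𝒴 𝒮 : Type*} [Fintype 𝒳] [Fintype 𝒴] [Fintype 𝒮]
    (p : 𝒳 → 𝒴 → ℝ) (hp : ∀ x y, 0 ≤ p x y) (hsum : ∑ x, ∑ y, p x y = 1)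
    (ν : ℝ) (ε₁ : ℝ) (t : ℕ)
    (hbad : ∑ x, ∑ y,
        (if p x y / (∑ x', p x' y) < (2:ℝ) ^ (-ν) then p x y else 0) ≤ ε₁)
    (h : 𝒳 → 𝒮 → (Fin t → Bool))
    (huniv : ∀ x₁ x₂ : 𝒳, x₁ ≠ x₂ →
      ((univ.filter (fun s => h x₁ s = h x₂ s)).card : ℝ) / Fintype.card 𝒮
        ≤ ((2:ℝ) ^ t)⁻¹) :
    ∑ x, ∑ y, ∑ s, p x y * (Fintype.card 𝒮 : ℝ)⁻¹ *
        (if (p x y / (∑ x', p x' y) < (2:ℝ) ^ (-ν) ∨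
             ∃ xhat : 𝒳, (2:ℝ) ^ (-ν) ≤ p xhat y / (∑ x', p x' y) ∧
               xhat ≠ x ∧ h xhat s = h x s)
          then (1:ℝ) else 0)
      ≤ ε₁ + (2:ℝ) ^ (ν - (t:ℝ)) := by
  have hδ : (0:ℝ) ≤ ((2:ℝ) ^ t)⁻¹ := by positivity
  have hcandidates : ∀ y, (#{xhat | (2:ℝ) ^ (-ν) ≤ p xhat y / ∑ x', p x' y} : ℝ) ≤ 2 ^ ν := by
    intro y
    simpa [rpow_neg zero_le_two] using
      card_filter_le_div_sum_le_inv (p · y) (hp · y) (rpow_pos_of_pos two_pos (-ν))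
  calc _ ≤ ∑ x, ∑ y, ((if p x y / (∑ x', p x' y) < (2:ℝ) ^ (-ν) then p x y else 0)
          + p x y * (2:ℝ) ^ (ν - (t:ℝ))) := by
        refine sum_le_sum fun x _ => sum_le_sum fun y _ => ?_
        refine sum_mul_inv_card_mul_ite_or_le (𝒮 := 𝒮) _ _ (hp x y) ?_
        calc _ ≤ _ := card_filter_exists_collision_div_le h hδ huniv _ x
          _ ≤ (2:ℝ) ^ ν * ((2:ℝ) ^ t)⁻¹ := mul_le_mul_of_nonneg_right (hcandidates y) hδ
          _ = (2:ℝ) ^ (ν - (t:ℝ)) := by rw [rpow_sub two_pos, rpow_natCast, div_eq_mul_inv]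
    _ = (∑ x, ∑ y, (if p x y / (∑ x', p x' y) < (2:ℝ) ^ (-ν) then p x y else 0))
          + (∑ x, ∑ y, p x y) * (2:ℝ) ^ (ν - (t:ℝ)) := by
        simp only [sum_add_distrib, sum_mul]
    _ ≤ ε₁ + (2:ℝ) ^ (ν - (t:ℝ)) := by
        rw [hsum, one_mul]
        exact add_le_add_left hbad _

/-- Reliability of the OW-SKA protocol: the probability (over the joint
pmf `p` of `(X,Y)` and an independent uniform seed `S`) that `X ∉ ℛ(Y)` or that some
`xhat ∈ ℛ(Y)`, `xhat ≠ X`, collides with `X` under the universal hash `h`, is at most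
`ε₁ + 2^{ν−t}`. -/
theorem owska_reliability
    {𝒳 𝒴 𝒮 : Type*} [Fintype 𝒳] [Fintype 𝒴] [Fintype 𝒮] [Nonempty 𝒮]
    (p : 𝒳 → 𝒴 → ℝ) (hp : ∀ x y, 0 ≤ p x y) (hsum : ∑ x, ∑ y, p x y = 1)
    (ν : ℝ) (ε₁ : ℝ) (hε₁ : 0 ≤ ε₁) (t : ℕ)
    (hbad : ∑ x, ∑ y,
        (if p x y / (∑ x', p x' y) < (2:ℝ) ^ (-ν) then p x y else 0) ≤ ε₁)
    (h : 𝒳 → 𝒮 → (Fin t → Bool))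
    (huniv : ∀ x₁ x₂ : 𝒳, x₁ ≠ x₂ →
      ((univ.filter (fun s => h x₁ s = h x₂ s)).card : ℝ) / Fintype.card 𝒮
        ≤ ((2:ℝ) ^ t)⁻¹) :
    ∑ x, ∑ y, ∑ s, p x y * (Fintype.card 𝒮 : ℝ)⁻¹ *
        (if (p x y / (∑ x', p x' y) < (2:ℝ) ^ (-ν) ∨
             ∃ xhat : 𝒳, (2:ℝ) ^ (-ν) ≤ p xhat y / (∑ x', p x' y) ∧
               xhat ≠ x ∧ h xhat s = h x s)
          then (1:ℝ) else 0)
      ≤ ε₁ + (2:ℝ) ^ (ν - (t:ℝ)) :=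
  owska_reliability_general p hp hsum ν ε₁ t hbad h huniv
end

section
/- Fix natural numbers n, t, r with 2t ≤ n. Let K = GF(2^{n−t}), L = GF(2^t), and let T : K → L be a surjective 𝔽₂-linear map. For a key (y_2, y_1) ∈ K × L, a message s' = (s'_r, …, s'_1) ∈ K^r, and a seed s = (s_2, s_1) ∈ K × L with s_2 ≠ 0, define mac((y_2,y_1), (s', s)) = T( s_2·y_2^{r+2} + Σ_{i=1}^r s'_i·y_2^i ) + y_1^3 + s_1·y_1 ∈ L. Let (X, Z) be jointly distributed random variables with X taking values in K × L and Z in a finite set 𝒵. Then for every message s'_f ∈ K^r, every seed s_f = (s_{2f}, s_{1f}) ∈ K × L with s_{2f} ≠ 0, and every tag t'_f ∈ L (impersonation attack): Σ_z Pr[Z=z] · Pr[ mac(X, (s'_f, s_f)) = t'_f | Z=z ] ≤ 3(r+2) · 2^{ −( t + H̃_∞(X|Z) − n ) }. -/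
open Finset Real
open scoped Classical

/-- Average conditional min-entropy `H̃_∞(X|Z)` of a joint pmf `q` on `𝒳 × 𝒵`. -/
noncomputable def condMinEnt {𝒳 𝒵 : Type*} [Fintype 𝒳] [Fintype 𝒵] [Nonempty 𝒳]
    (q : 𝒳 → 𝒵 → ℝ) : ℝ :=
  - Real.logb 2 (∑ z ∈ Finset.univ.filter (fun z => 0 < ∑ x, q x z),
      (∑ x, q x z) *
        Finset.univ.sup' Finset.univ_nonempty (fun x => q x z / ∑ x', q x' z))

/-- The message authentication code
`mac((y₂,y₁),(s',s)) = T(s₂·y₂^{r+2} + Σ_{i=1}^r s'_i·y₂^i) + y₁³ + s₁·y₁`. -/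
noncomputable def mac {K L : Type*} [Field K] [Field L] (T : K → L) (r : ℕ)
    (key : K × L) (s' : Fin r → K) (s : K × L) : L :=
  T (s.1 * key.1 ^ (r + 2) + ∑ i : Fin r, s' i * key.1 ^ ((i : ℕ) + 1)) +
    key.2 ^ 3 + s.2 * key.2

/-!
For a fixed first key component `y₂` the tag equation `mac(key) = τ` is a monic cubic in `y₁`,
so at most `3·|K|` keys produce a given tag. Conditioned on `Z = z`, each of these keys has
probability at most the best guessing probability `max_x Pr[X = x | Z = z]`; averaging over `z`
gives at most `3·|K|·2^{-H̃_∞(X|Z)}`, and `|K| = 2^{n-t}`.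
-/

lemma card_filter_cubic_eq_zero_le {L : Type*} [CommRing L] [IsDomain L] [Fintype L] (a c : L) :
    #{y : L | y ^ 3 + a * y + c = 0} ≤ 3 := by
  open Polynomial in
  set q : L[X] := X ^ 3 + C a * X + C c
  have hdeg : q.natDegree = 3 := by unfold q; compute_degree!
  have hq : q ≠ 0 := by rintro h; simp [h] at hdeg
  calc #{y : L | y ^ 3 + a * y + c = 0}
      ≤ #q.roots.toFinset := card_le_card fun y hy => by
        simp_all [q, mem_roots hq]
    _ ≤ Multiset.card q.roots := Multiset.toFinset_card_le _
    _ ≤ 3 := hdeg ▸ card_roots' q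

lemma card_filter_prod_le_mul {α β : Type*} [Fintype α] [Fintype β] (P : α × β → Prop) (k : ℕ)
    (hP : ∀ a, #{b | P (a, b)} ≤ k) : #{x | P x} ≤ k * Fintype.card α := by
  calc #{x | P x} = ∑ a, #{b | P (a, b)} := by
        simp only [card_filter, Fintype.sum_prod_type]
    _ ≤ ∑ _a : α, k := sum_le_sum fun a _ => hP a
    _ = k * Fintype.card α := by simp [mul_comm]

lemma card_mac_eq_le {K L : Type*} [Field K] [Fintype K] [Field L] [Fintype L]
    (T : K → L) (r : ℕ) (s' : Fin r → K) (s : K × L) (τ : L) :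
    #{key | mac T r key s' s = τ} ≤ 3 * Fintype.card K := by
  refine card_filter_prod_le_mul _ 3 fun y₂ => ?_
  set c := T (s.1 * y₂ ^ (r + 2) + ∑ i : Fin r, s' i * y₂ ^ ((i : ℕ) + 1)) - τ
  calc #{y₁ | mac T r (y₂, y₁) s' s = τ} = #{y₁ : L | y₁ ^ 3 + s.2 * y₁ + c = 0} := by
        congr 1; ext y₁
        simp only [mem_filter, mem_univ, true_and, mac, c]
        constructor <;> intro h <;> linear_combination h
    _ ≤ 3 := card_filter_cubic_eq_zero_le _ _

-- Equality holds except at `x = 0`, where the junk value `logb 2 0 = 0` gives `2 ^ 0 = 1`.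
lemma le_two_rpow_logb {x : ℝ} (hx : 0 ≤ x) : x ≤ 2 ^ logb 2 x := by
  rcases hx.eq_or_lt with rfl | hx
  · simp
  · rw [rpow_logb two_pos (by norm_num) hx]

lemma sum_cond_prob_le_card_mul {𝒳 𝒵 : Type*} [Fintype 𝒳] [Fintype 𝒵] [Nonempty 𝒳]
    {q : 𝒳 → 𝒵 → ℝ} (hq : ∀ x z, 0 ≤ q x z) (F : Finset 𝒳) :
    ∑ z ∈ univ.filter (fun z => 0 < ∑ x, q x z),
        (∑ x, q x z) * ((∑ x ∈ F, q x z) / ∑ x, q x z)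
      ≤ #F * (2 : ℝ) ^ (-condMinEnt q) := by
  set m := fun z => univ.sup' univ_nonempty (fun x => q x z / ∑ x', q x' z)
  have hm : ∀ z x, q x z / ∑ x', q x' z ≤ m z := fun z x =>
    le_sup' (fun x => q x z / ∑ x', q x' z) (mem_univ x)
  have hterm : ∀ z ∈ univ.filter (fun z => 0 < ∑ x, q x z),
      (∑ x, q x z) * ((∑ x ∈ F, q x z) / ∑ x, q x z) ≤ #F * ((∑ x, q x z) * m z) := by
    intro z hz
    have hz : 0 < ∑ x, q x z := (mem_filter.mp hz).2
    rw [mul_div_cancel₀ _ hz.ne', ← nsmul_eq_mul]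
    exact sum_le_card_nsmul _ _ _ fun x _ => (div_le_iff₀' hz).mp (hm z x)
  have hS : 0 ≤ ∑ z ∈ univ.filter (fun z => 0 < ∑ x, q x z), (∑ x, q x z) * m z :=
    sum_nonneg fun z hz => mul_nonneg (mem_filter.mp hz).2.le <|
      (div_nonneg (hq _ z) (mem_filter.mp hz).2.le).trans (hm z (Classical.arbitrary 𝒳))
  calc _ ≤ ∑ z ∈ univ.filter (fun z => 0 < ∑ x, q x z), #F * ((∑ x, q x z) * m z) :=
        sum_le_sum hterm
    _ = #F * ∑ z ∈ univ.filter (fun z => 0 < ∑ x, q x z), (∑ x, q x z) * m z :=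
        (mul_sum _ _ _).symm
    _ ≤ #F * (2 : ℝ) ^ (-condMinEnt q) := by
        rw [condMinEnt, neg_neg]
        gcongr
        exact le_two_rpow_logb hS

theorem mac_impersonation_bound_general
    {K L 𝒵 : Type*} [Field K] [Fintype K] [Field L] [Fintype L] [Fintype 𝒵]
    (n t r : ℕ) (hnt : 2 * t ≤ n)
    (hK : Fintype.card K = 2 ^ (n - t))
    (T : K → L)
    (p : K × L → 𝒵 → ℝ) (hp : ∀ xy z, 0 ≤ p xy z)
    (s'f : Fin r → K) (sf : K × L) (t'f : L) :
    ∑ z ∈ univ.filter (fun z => 0 < ∑ xy, p xy z),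
        (∑ xy, p xy z) *
          ((∑ xy ∈ univ.filter (fun xy => mac T r xy s'f sf = t'f), p xy z) /
            (∑ xy, p xy z))
      ≤ 3 * (r + 2) * (2:ℝ) ^ (-((t:ℝ) + condMinEnt p - (n:ℝ))) := by
  have hcard : (#{xy | mac T r xy s'f sf = t'f} : ℝ) ≤ 3 * 2 ^ (n - t) := by
    exact_mod_cast hK ▸ card_mac_eq_le T r s'f sf t'f
  have hexp : -((t:ℝ) + condMinEnt p - n) = ((n - t : ℕ) : ℝ) + -condMinEnt p := by
    rw [Nat.cast_sub (by omega)]; ring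
  calc _ ≤ #{xy | mac T r xy s'f sf = t'f} * (2:ℝ) ^ (-condMinEnt p) :=
        sum_cond_prob_le_card_mul hp _
    _ ≤ 3 * 2 ^ (n - t) * (2:ℝ) ^ (-condMinEnt p) := by gcongr
    _ ≤ 3 * (r + 2) * (2 ^ (n - t) * (2:ℝ) ^ (-condMinEnt p)) := by
        rw [← mul_assoc]; gcongr; nlinarith
    _ = 3 * (r + 2) * (2:ℝ) ^ (-((t:ℝ) + condMinEnt p - n)) := by
        rw [hexp, rpow_add two_pos, rpow_natCast]

/-- Impersonation-attack bound for the one-time MAC with a partially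
leaked key: for any message `s'f`, seed `sf` (with nonzero first component) and tag
`t'f`, `Σ_z Pr[Z=z] · Pr[mac(X,(s'f,sf)) = t'f | Z=z] ≤ 3(r+2)·2^{−(t+H̃_∞(X|Z)−n)}`. -/
theorem mac_impersonation_bound
    {K L 𝒵 : Type*} [Field K] [Fintype K] [Field L] [Fintype L] [Fintype 𝒵]
    (n t r : ℕ) (hnt : 2 * t ≤ n)
    (hK : Fintype.card K = 2 ^ (n - t)) (hL : Fintype.card L = 2 ^ t)
    (T : K → L) (hadd : ∀ u v : K, T (u + v) = T u + T v)
    (hsurj : Function.Surjective T)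
    (p : K × L → 𝒵 → ℝ) (hp : ∀ xy z, 0 ≤ p xy z)
    (hsum : ∑ xy, ∑ z, p xy z = 1)
    (s'f : Fin r → K) (sf : K × L) (hs2f : sf.1 ≠ 0) (t'f : L) :
    ∑ z ∈ univ.filter (fun z => 0 < ∑ xy, p xy z),
        (∑ xy, p xy z) *
          ((∑ xy ∈ univ.filter (fun xy => mac T r xy s'f sf = t'f), p xy z) /
            (∑ xy, p xy z))
      ≤ 3 * (r + 2) * (2:ℝ) ^ (-((t:ℝ) + condMinEnt p - (n:ℝ))) :=
  mac_impersonation_bound_general n t r hnt hK T p hp s'f sf t'f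
end
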